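/- Let A be an associative algebra over a field k and f : A → k a linear functional. Then f vanishes on a two-sided ideal of A of finite codimension if and only if f vanishes on a left ideal of A of finite codimension. -/

import Mathlib

/-!
A two-sided ideal is in particular a left ideal. Conversely, if `f` vanishes on a left ideal `J`
of finite codimension, then `A` acts on the finite-dimensional space `A ⧸ J`, and the annihilator
of this module is a two-sided ideal inside `J`; being the kernel of the representation
`A → End_k (A ⧸ J)`, it has finite codimension.
-/

theorem Module.finiteDimensional_quotient_annihilator (k A M : Type*) [Field k] [Ring A]
    [Algebra k A] [AddCommGroup M] [Module A M] [Module k M] [IsScalarTower k A M]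
    [FiniteDimensional k M] :
    FiniteDimensional k (A ⧸ (Module.annihilator A M).restrictScalars k) := by
  have hker : LinearMap.ker (Algebra.lsmul k k M).toLinearMap =
      (Module.annihilator A M).restrictScalars k := by
    ext a
    simp [Module.mem_annihilator, LinearMap.ext_iff]
  rw [← hker]
  exact Module.Finite.equiv (LinearMap.quotKerEquivRange _).symm

theorem Ideal.annihilator_quotient_le {A : Type*} [Ring A] (J : Ideal A) :
    Module.annihilator A (A ⧸ J) ≤ J := fun a ha => by
  have := Module.mem_annihilator.mp ha (Submodule.Quotient.mk 1)
  rwa [← Submodule.Quotient.mk_smul, smul_eq_mul, mul_one, Submodule.Quotient.mk_eq_zero] at this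

theorem stmt0 {k A : Type*} [Field k] [Ring A] [Algebra k A] (f : A →ₗ[k] k) :
    (∃ I : Submodule k A, (∀ (a : A), ∀ x ∈ I, a * x ∈ I) ∧ (∀ (a : A), ∀ x ∈ I, x * a ∈ I) ∧
      FiniteDimensional k (A ⧸ I) ∧ ∀ x ∈ I, f x = 0) ↔
    (∃ J : Submodule k A, (∀ (a : A), ∀ x ∈ J, a * x ∈ J) ∧
      FiniteDimensional k (A ⧸ J) ∧ ∀ x ∈ J, f x = 0) := by
  constructor
  · rintro ⟨I, hleft, -, hfin, hf⟩
    exact ⟨I, hleft, hfin, hf⟩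
  · rintro ⟨J, hleft, hfin, hf⟩
    let L : Ideal A := { J with smul_mem' := hleft }
    have : FiniteDimensional k (A ⧸ L) :=
      (Module.Finite.equiv_iff (Submodule.Quotient.restrictScalarsEquiv k L)).mp hfin
    let I := Module.annihilator A (A ⧸ L)
    exact ⟨I.restrictScalars k, fun a _ hx => I.mul_mem_left a hx,
      fun a _ hx => I.mul_mem_right a hx, Module.finiteDimensional_quotient_annihilator k A _,
      fun x hx => hf x (L.annihilator_quotient_le hx)⟩
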